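/- Every inclusionwise minimal (1,k)-factor of a graph G is a perfect k-star packing. -/

import Mathlib

/-- `M` is a matching of `G`: a set of edges of `G` that are pairwise vertex-disjoint. -/
def IsMatching {V : Type*} (G : SimpleGraph V) (M : Finset (Sym2 V)) : Prop :=
  ↑M ⊆ G.edgeSet ∧ (M : Set (Sym2 V)).Pairwise fun e f => ∀ v : V, ¬(v ∈ e ∧ v ∈ f)

/-- A vertex `v` is covered by an edge set `F` if some edge of `F` is incident to it. -/
def Covers {V : Type*} (F : Finset (Sym2 V)) (v : V) : Prop := ∃ e ∈ F, v ∈ e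

instance {V : Type*} [DecidableEq V] (F : Finset (Sym2 V)) (v : V) : Decidable (Covers F v) :=
  inferInstanceAs (Decidable (∃ e ∈ F, v ∈ e))

/-- A stable (independent) set of vertices. -/
def IsStable {V : Type*} (G : SimpleGraph V) (S : Finset V) : Prop :=
  ∀ u ∈ S, ∀ v ∈ S, ¬ G.Adj u v

/-- The external neighborhood `N(S)`. -/
def nbr {V : Type*} [Fintype V] [DecidableEq V] (G : SimpleGraph V) [DecidableRel G.Adj]
    (S : Finset V) : Finset V :=
  Finset.univ.filter fun w => w ∉ S ∧ ∃ u ∈ S, G.Adj u w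

/-- degree of a vertex in an edge set -/
def degF {V : Type*} [DecidableEq V] (F : Finset (Sym2 V)) (v : V) : ℕ :=
  (F.filter fun e => v ∈ e).card

/-- `F` is a perfect `k`-star packing: every component of `F` is a star with
between 1 and `k` edges, and `F` covers every vertex.  Components are stars with
at most `k` edges iff all degrees are at most `k` and no edge joins two vertices
of degree at least 2. -/
def IsPerfectKStarPacking {V : Type*} [DecidableEq V] (G : SimpleGraph V)
    (F : Finset (Sym2 V)) (k : ℕ) : Prop :=
  ↑F ⊆ G.edgeSet ∧ (∀ v : V, degF F v ≤ k) ∧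
    (∀ e ∈ F, ∀ u v : V, e = s(u, v) → degF F u = 1 ∨ degF F v = 1) ∧
    ∀ v : V, Covers F v

/-- `F` is a matching-`k`-cover: the union of `k` matchings of `G` covering every vertex. -/
def IsMatchingKCover {V : Type*} [DecidableEq V] (G : SimpleGraph V) (F : Finset (Sym2 V)) (k : ℕ) : Prop :=
  (∃ M : Fin k → Finset (Sym2 V), (∀ i, IsMatching G (M i)) ∧ F = Finset.univ.sup M) ∧
    ∀ v : V, Covers F v

/-- `F` is a `(1,k)`-factor: every vertex is incident to at least 1 and at most `k` edges of `F`. -/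
def Is1kFactor {V : Type*} [DecidableEq V] (G : SimpleGraph V)
    (F : Finset (Sym2 V)) (k : ℕ) : Prop :=
  ↑F ⊆ G.edgeSet ∧ ∀ v : V, 1 ≤ degF F v ∧ degF F v ≤ k

/-- inclusionwise minimality of an edge set with respect to a property -/
def MinimalForEdges {V : Type*} (P : Finset (Sym2 V) → Prop) (F : Finset (Sym2 V)) : Prop :=
  P F ∧ ∀ F' ⊂ F, ¬ P F'

/- An edge of a (1,k)-factor whose two ends both have degree at least 2 can be deleted: the
ends keep degree at least 1 and no other degree changes. So in a minimal (1,k)-factor every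
edge has an end of degree 1, i.e. every component is a star. -/

section

variable {V : Type*} [DecidableEq V]

lemma degF_erase_of_mem {F : Finset (Sym2 V)} {e : Sym2 V} {w : V} (he : e ∈ F) (hw : w ∈ e) :
    degF (F.erase e) w = degF F w - 1 := by
  unfold degF
  rw [Finset.filter_erase, Finset.card_erase_of_mem (Finset.mem_filter.mpr ⟨he, hw⟩)]

lemma degF_erase_of_notMem (F : Finset (Sym2 V)) {e : Sym2 V} {w : V} (hw : w ∉ e) :
    degF (F.erase e) w = degF F w := by
  unfold degF
  rw [Finset.filter_erase, Finset.erase_eq_of_notMem (by simp [hw])]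

lemma covers_iff_degF_pos (F : Finset (Sym2 V)) (v : V) : Covers F v ↔ 0 < degF F v := by
  simp [degF, Covers, Finset.card_pos, Finset.filter_nonempty_iff]

lemma Is1kFactor.erase {G : SimpleGraph V} {F : Finset (Sym2 V)} {k : ℕ}
    (hF : Is1kFactor G F k) {u v : V} (he : s(u, v) ∈ F) (hu : 2 ≤ degF F u)
    (hv : 2 ≤ degF F v) : Is1kFactor G (F.erase s(u, v)) k := by
  refine ⟨fun x hx => hF.1 (Finset.erase_subset _ F hx), fun w => ?_⟩
  by_cases hw : w ∈ s(u, v)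
  · have hw2 : 2 ≤ degF F w := by
      rcases Sym2.mem_iff.mp hw with rfl | rfl <;> assumption
    rw [degF_erase_of_mem he hw]
    have := (hF.2 w).2
    omega
  · rw [degF_erase_of_notMem F hw]
    exact hF.2 w

end

theorem stmt_8_general {V : Type*} [DecidableEq V] (G : SimpleGraph V)
    (k : ℕ) (F : Finset (Sym2 V))
    (hmin : MinimalForEdges (fun F' => Is1kFactor G F' k) F) :
    IsPerfectKStarPacking G F k := by
  obtain ⟨hF, hminimal⟩ := hmin
  refine ⟨hF.1, fun v => (hF.2 v).2, ?_, fun v => (covers_iff_degF_pos F v).mpr (hF.2 v).1⟩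
  rintro e he u v rfl
  by_contra! hne
  have hu := (hF.2 u).1
  have hv := (hF.2 v).1
  exact hminimal _ (Finset.erase_ssubset he) (hF.erase he (by omega) (by omega))

theorem stmt_8 {V : Type*} [Fintype V] [DecidableEq V] (G : SimpleGraph V)
    (k : ℕ) (F : Finset (Sym2 V))
    (hmin : MinimalForEdges (fun F' => Is1kFactor G F' k) F) :
    IsPerfectKStarPacking G F k :=
  stmt_8_general G k F hmin
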